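/- arXiv:math/0110144 — 6 statements merged into one kernel-verified Lean document; each statement's English description precedes it below -/
import Mathlib

section
/- Let F : ℝⁿ → ℝⁿ be a homogeneous polynomial map of degree d ≥ 1 such that F(x) is proportional to x for every x. Then F(x) = G(x) • x for some homogeneous polynomial G of degree d − 1. -/
/-!
Since `ℝ` is infinite, pointwise proportionality is the polynomial identity
`X i * P j = X j * P i`. A monomial `m` of `P i` has positive degree, so some `X j` divides it;
comparing coefficients of `X j * m` on both sides shows that `X i` divides it too, hence
`P i = X i * Q i`. Cancelling `X i * X j` in the identity makes all the `Q i` equal.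
-/

namespace MvPolynomial

variable {R σ : Type*} [CommSemiring R]

theorem X_dvd_of_forall_mem_support_ne_zero {p : MvPolynomial σ R} {i : σ}
    (h : ∀ m ∈ p.support, m i ≠ 0) : X i ∣ p := by
  rw [p.as_sum]
  exact Finset.dvd_sum fun m hm => X_dvd_monomial.mpr (Or.inr (h m hm))

theorem X_dvd_of_X_mul_eq_X_mul {P : σ → MvPolynomial σ R} {i : σ}
    (h0 : coeff 0 (P i) = 0) (hcomm : ∀ j, X i * P j = X j * P i) : X i ∣ P i := by
  classical
  refine X_dvd_of_forall_mem_support_ne_zero fun m hm hmi => ?_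
  obtain ⟨j, hj⟩ : ∃ j, m j ≠ 0 := by
    by_contra! hm0
    exact mem_support_iff.mp hm (by rwa [show m = 0 from Finsupp.ext hm0])
  have hji : j ≠ i := by rintro rfl; exact hj hmi
  have hcoeff := congrArg (coeff (Finsupp.single j 1 + m)) (hcomm j)
  rw [coeff_X_mul, coeff_X_mul', if_neg (by simp [hji, hmi])] at hcoeff
  exact mem_support_iff.mp hm hcoeff.symm

theorem IsHomogeneous.of_X_mul {q : MvPolynomial σ R} {i : σ} {d : ℕ}
    (h : (X i * q).IsHomogeneous (d + 1)) : q.IsHomogeneous d := by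
  intro m hm
  have := h (show coeff (Finsupp.single i 1 + m) (X i * q) ≠ 0 by rwa [coeff_X_mul])
  rw [map_add, Finsupp.weight_single, Pi.one_apply, smul_eq_mul, mul_one] at this
  omega

theorem exists_isHomogeneous_forall_eq_X_mul {P : σ → MvPolynomial σ R} {d : ℕ}
    (hP : ∀ i, (P i).IsHomogeneous (d + 1)) (hcomm : ∀ i j, X i * P j = X j * P i) :
    ∃ G : MvPolynomial σ R, G.IsHomogeneous d ∧ ∀ i, P i = X i * G := by
  rcases isEmpty_or_nonempty σ with hσ | ⟨⟨i₀⟩⟩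
  · exact ⟨0, isHomogeneous_zero _ _ _, isEmptyElim⟩
  have hdvd i : X i ∣ P i :=
    X_dvd_of_X_mul_eq_X_mul ((hP i).coeff_eq_zero (by simp)) (hcomm i)
  choose Q hQ using hdvd
  refine ⟨Q i₀, IsHomogeneous.of_X_mul (hQ i₀ ▸ hP i₀), fun i => ?_⟩
  have h := hcomm i₀ i
  rw [hQ i, hQ i₀, mul_left_comm, X_mul_cancel_left_iff, X_mul_cancel_left_iff] at h
  rw [hQ i, h]

end MvPolynomial

open MvPolynomial

/-- A homogeneous polynomial map `F : ℝⁿ → ℝⁿ` of degree `d ≥ 1` such that `F x`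
is proportional to `x` everywhere equals `G x • x` for a homogeneous polynomial `G`
of degree `d - 1`. -/
theorem stmt1 {n : ℕ} (d : ℕ) (hd : 1 ≤ d) (P : Fin n → MvPolynomial (Fin n) ℝ)
    (hhom : ∀ i, (P i).IsHomogeneous d)
    (hprop : ∀ (x : Fin n → ℝ) (i j : Fin n),
      x i * MvPolynomial.eval x (P j) = x j * MvPolynomial.eval x (P i)) :
    ∃ G : MvPolynomial (Fin n) ℝ, G.IsHomogeneous (d - 1) ∧
      ∀ (x : Fin n → ℝ) (i : Fin n),
        MvPolynomial.eval x (P i) = MvPolynomial.eval x G * x i := by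
  have hcomm (i j : Fin n) : X i * P j = X j * P i :=
    MvPolynomial.funext fun x => by simpa using hprop x i j
  obtain ⟨d, rfl⟩ := Nat.exists_eq_add_of_le' hd
  obtain ⟨G, hG, hPG⟩ := exists_isHomogeneous_forall_eq_X_mul hhom hcomm
  exact ⟨G, hG, fun x i => by rw [hPG i, eval_mul, eval_X, mul_comm]⟩
end

section
/- Let Λ : ℝⁿ → Λ²ℝⁿ be a linear map satisfying Λ(x) ∧ x = 0 for all x ∈ ℝⁿ (n ≥ 1). Then there exists a vector b ∈ ℝⁿ such that Λ(x) = b ∧ x for all x. -/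
/-!
Contracting a 2-vector `ω` with the coordinate covectors of a basis gives its skew coefficients
`ω i j`, and contracting `ω ∧ x` three times gives `ω j k * x i - ω i k * x j + ω i j * x k`.
For `ω = Λ x` this cyclic sum vanishes. Taking `x = e k` shows `Λ (e k) i j = 0` for `i, j ≠ k`;
taking `x = e j + e k` then shows that `β i := Λ (e j) i j` does not depend on `j ≠ i`. These
two facts say that `Λ x` and `b ∧ x`, where `b` has coordinates `β`, have the same coefficients
on basis vectors, hence for all `x`. Finally, a 2-vector is `1/2` times the sum of its
coefficients against the `e i ∧ e j`, so it is determined by them.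
-/

theorem Module.Basis.exists_eq_coord_mul_sub_of_cyclic {R M ι : Type*} [CommRing R]
    [AddCommGroup M] [Module R M] (e : Module.Basis ι R M) (L : ι → ι → Module.Dual R M)
    (hdiag : ∀ i x, L i i x = 0) (hskew : ∀ i j x, L j i x = -L i j x)
    (hcyc : ∀ i j k x, L j k x * e.coord i x - L i k x * e.coord j x + L i j x * e.coord k x = 0) :
    ∃ β : ι → R, ∀ i j x, L i j x = β i * e.coord j x - β j * e.coord i x := by
  classical
  have coord_self (i j : ι) : e.coord i (e j) = if j = i then 1 else 0 := by
    simp [Finsupp.single_apply]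
  have vanish (i j k : ι) (hik : i ≠ k) (hjk : j ≠ k) : L i j (e k) = 0 := by
    simpa [coord_self, hik.symm, hjk.symm] using hcyc i j k (e k)
  have indep (i j k : ι) (hij : i ≠ j) (hik : i ≠ k) : L i j (e j) = L i k (e k) := by
    rcases eq_or_ne j k with rfl | hjk
    · rfl
    have := hcyc i j k (e j + e k)
    simp only [map_add, coord_self, if_neg hij.symm, if_neg hik.symm, if_neg hjk.symm,
      if_neg hjk, ↓reduceIte, vanish i k j hij hjk.symm, vanish i j k hik hjk] at this
    linear_combination this
  let β : ι → R := fun i => if h : ∃ j, j ≠ i then L i h.choose (e h.choose) else 0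
  have hβ (i j : ι) (hij : i ≠ j) : L i j (e j) = β i := by
    have h : ∃ j, j ≠ i := ⟨j, hij.symm⟩
    simp only [β, dif_pos h]
    exact indep i j h.choose hij h.choose_spec.symm
  refine ⟨β, fun i j => ?_⟩
  suffices L i j = β i • e.coord j - β j • e.coord i from fun x => by simp [this]
  refine e.ext fun k => ?_
  simp only [LinearMap.sub_apply, LinearMap.smul_apply, smul_eq_mul, coord_self]
  rcases eq_or_ne i j with rfl | hij
  · simp [hdiag]
  rcases eq_or_ne k j with rfl | hkj
  · simp [hβ i k hij, hij.symm]
  rcases eq_or_ne k i with rfl | hki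
  · rw [hskew j k, hβ j k hij.symm]
    simp [hij]
  · simp [vanish i j k hki.symm hkj.symm, hki, hkj]

namespace ExteriorAlgebra

open CliffordAlgebra

variable {R M : Type*} [CommRing R] [AddCommGroup M] [Module R M]

noncomputable def bivectorCoeff (d₁ d₂ : Module.Dual R M) : ExteriorAlgebra R M →ₗ[R] R :=
  (algebraMapInv : ExteriorAlgebra R M →ₐ[R] R).toLinearMap ∘ₗ contractLeft d₂ ∘ₗ contractLeft d₁

noncomputable def trivectorCoeff (d₁ d₂ d₃ : Module.Dual R M) : ExteriorAlgebra R M →ₗ[R] R :=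
  bivectorCoeff d₂ d₃ ∘ₗ contractLeft d₁

theorem contractLeft_ι_mul_ι (d : Module.Dual R M) (u v : M) :
    contractLeft d (ι R u * ι R v) = d u • ι R v - d v • ι R u := by
  rw [contractLeft_ι_mul, contractLeft_ι, ← Algebra.commutes, ← Algebra.smul_def]

theorem bivectorCoeff_ι_mul_ι (d₁ d₂ : Module.Dual R M) (u v : M) :
    bivectorCoeff d₁ d₂ (ι R u * ι R v) = d₁ u * d₂ v - d₁ v * d₂ u := by
  simp [bivectorCoeff, contractLeft_ι_mul_ι]

theorem bivectorCoeff_self (d : Module.Dual R M) (ω : ExteriorAlgebra R M) :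
    bivectorCoeff d d ω = 0 := by
  simp [bivectorCoeff, contractLeft_contractLeft]

theorem bivectorCoeff_comm (d₁ d₂ : Module.Dual R M) (ω : ExteriorAlgebra R M) :
    bivectorCoeff d₂ d₁ ω = -bivectorCoeff d₁ d₂ ω := by
  simp [bivectorCoeff, contractLeft_comm d₁ d₂]

theorem ι_mul_ι_mem_exteriorPower_two (u v : M) : ι R u * ι R v ∈ ⋀[R]^2 M := by
  rw [exteriorPower, pow_two]
  exact Submodule.mul_mem_mul (LinearMap.mem_range_self _ u) (LinearMap.mem_range_self _ v)

@[elab_as_elim]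
theorem exteriorPower_two_induction {C : ExteriorAlgebra R M → Prop} {ω : ExteriorAlgebra R M}
    (hω : ω ∈ ⋀[R]^2 M) (ι_mul_ι : ∀ u v, C (ι R u * ι R v))
    (add : ∀ x y, C x → C y → C (x + y)) : C ω := by
  rw [exteriorPower, pow_two] at hω
  refine Submodule.mul_induction_on hω ?_ add
  rintro _ ⟨u, rfl⟩ _ ⟨v, rfl⟩
  exact ι_mul_ι u v

theorem trivectorCoeff_mul_ι (d₁ d₂ d₃ : Module.Dual R M) {ω : ExteriorAlgebra R M}
    (hω : ω ∈ ⋀[R]^2 M) (x : M) :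
    trivectorCoeff d₁ d₂ d₃ (ω * ι R x) =
      bivectorCoeff d₂ d₃ ω * d₁ x - bivectorCoeff d₁ d₃ ω * d₂ x +
        bivectorCoeff d₁ d₂ ω * d₃ x := by
  refine exteriorPower_two_induction hω (fun u v => ?_) (fun y z hy hz => ?_)
  · have : contractLeft d₁ (ι R u * ι R v * ι R x) =
        d₁ u • (ι R v * ι R x) - d₁ v • (ι R u * ι R x) + d₁ x • (ι R u * ι R v) := by
      rw [mul_assoc, contractLeft_ι_mul, contractLeft_ι_mul_ι, mul_sub, mul_smul_comm,
        mul_smul_comm]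
      abel
    simp only [trivectorCoeff, LinearMap.comp_apply, this, map_add, map_sub, map_smul,
      bivectorCoeff_ι_mul_ι, smul_eq_mul]
    ring
  · simp only [add_mul, map_add, hy, hz]
    ring

section Basis

variable {κ : Type*} [Fintype κ] (e : Module.Basis κ R M)

theorem ι_mul_ι_eq_sum (u v : M) :
    ι R u * ι R v = ∑ i, ∑ j, (e.coord i u * e.coord j v) • (ι R (e i) * ι R (e j)) := by
  conv_lhs => rw [← e.sum_repr u, ← e.sum_repr v]
  simp only [map_sum, map_smul, Finset.sum_mul, Finset.mul_sum, smul_mul_smul_comm,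
    Module.Basis.coord_apply]
  exact Finset.sum_comm

theorem two_smul_eq_sum_bivectorCoeff {ω : ExteriorAlgebra R M} (hω : ω ∈ ⋀[R]^2 M) :
    (2 : R) • ω =
      ∑ i, ∑ j, bivectorCoeff (e.coord i) (e.coord j) ω • (ι R (e i) * ι R (e j)) := by
  refine exteriorPower_two_induction hω (fun u v => ?_) (fun y z hy hz => ?_)
  · have anticomm : ι R v * ι R u = -(ι R u * ι R v) :=
      eq_neg_of_add_eq_zero_right (ι_add_mul_swap u v)
    simp only [bivectorCoeff_ι_mul_ι, sub_smul, Finset.sum_sub_distrib, ← ι_mul_ι_eq_sum]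
    rw [anticomm, sub_neg_eq_add, two_smul]
  · simp only [smul_add, hy, hz, map_add, add_smul, Finset.sum_add_distrib]

theorem eq_of_bivectorCoeff_eq [Invertible (2 : R)] {ω ω' : ExteriorAlgebra R M}
    (hω : ω ∈ ⋀[R]^2 M) (hω' : ω' ∈ ⋀[R]^2 M)
    (h : ∀ i j,
      bivectorCoeff (e.coord i) (e.coord j) ω = bivectorCoeff (e.coord i) (e.coord j) ω') :
    ω = ω' := by
  rw [← (isUnit_of_invertible (2 : R)).smul_left_cancel, two_smul_eq_sum_bivectorCoeff e hω,
    two_smul_eq_sum_bivectorCoeff e hω']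
  simp only [h]

end Basis

theorem exists_eq_ι_mul_ι_of_mul_ι_eq_zero [Invertible (2 : R)] [Module.Free R M]
    [Module.Finite R M] (Λ : M →ₗ[R] ExteriorAlgebra R M) (hΛ : ∀ x, Λ x ∈ ⋀[R]^2 M)
    (hwedge : ∀ x, Λ x * ι R x = 0) : ∃ b : M, ∀ x, Λ x = ι R b * ι R x := by
  let e := Module.Free.chooseBasis R M
  obtain ⟨β, hβ⟩ := e.exists_eq_coord_mul_sub_of_cyclic
    (fun i j => bivectorCoeff (e.coord i) (e.coord j) ∘ₗ Λ)
    (fun i x => bivectorCoeff_self _ _) (fun i j x => bivectorCoeff_comm _ _ _)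
    (fun i j k x => by
      simpa [hwedge x] using
        (trivectorCoeff_mul_ι (e.coord i) (e.coord j) (e.coord k) (hΛ x) x).symm)
  refine ⟨e.equivFun.symm β, fun x =>
    eq_of_bivectorCoeff_eq e (hΛ x) (ι_mul_ι_mem_exteriorPower_two _ _) fun i j => ?_⟩
  simp only [LinearMap.comp_apply] at hβ
  rw [bivectorCoeff_ι_mul_ι, hβ]
  simp only [Module.Basis.coord_apply, ← Module.Basis.equivFun_apply, LinearEquiv.apply_symm_apply]
  ring

end ExteriorAlgebra

open ExteriorAlgebra

theorem stmt2_general {n : ℕ}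
    (Λ : (Fin n → ℝ) →ₗ[ℝ] ExteriorAlgebra ℝ (Fin n → ℝ))
    (hgrade : ∀ x, Λ x ∈ (LinearMap.range (ι ℝ : (Fin n → ℝ) →ₗ[ℝ] ExteriorAlgebra ℝ (Fin n → ℝ))) ^ 2)
    (hwedge : ∀ x, Λ x * ι ℝ x = 0) :
    ∃ b : Fin n → ℝ, ∀ x, Λ x = ι ℝ b * ι ℝ x :=
  exists_eq_ι_mul_ι_of_mul_ι_eq_zero Λ hgrade hwedge

/-- If a linear map `Λ : ℝⁿ → Λ²ℝⁿ` satisfies `Λ x ∧ x = 0` for all `x`, then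
`Λ x = b ∧ x` for some fixed vector `b`. The second exterior power is realized as
the degree-2 component of the exterior algebra, and the wedge product is the
exterior algebra multiplication. -/
theorem stmt2 {n : ℕ} (hn : 1 ≤ n)
    (Λ : (Fin n → ℝ) →ₗ[ℝ] ExteriorAlgebra ℝ (Fin n → ℝ))
    (hgrade : ∀ x, Λ x ∈ (LinearMap.range (ι ℝ : (Fin n → ℝ) →ₗ[ℝ] ExteriorAlgebra ℝ (Fin n → ℝ))) ^ 2)
    (hwedge : ∀ x, Λ x * ι ℝ x = 0) :
    ∃ b : Fin n → ℝ, ∀ x, Λ x = ι ℝ b * ι ℝ x :=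
  stmt2_general Λ hgrade hwedge
end

section
/- Let Γ : ℝⁿ → ℝⁿ be a vector-valued quadratic form (each coordinate is a homogeneous polynomial of degree 2) whose complexification satisfies: Γ(x) is parallel to x (i.e., Γ(x) ∧ x = 0) for every x in the asymptotic cone C = {x ∈ ℂⁿ : (x,x) = 0}, where (·,·) denotes the ℂ-bilinear extension of the standard inner product. Then there exist a vector b ∈ ℝⁿ and a linear functional λ : ℝⁿ → ℝ such that Γ(x) = (x,x)·b + λ(x)·x for all x. -/
/-!
Write `Γ_a(x) = xᵀ A_a x`. For `j ≠ k` the vector `z = e_j + i e_k` lies on the cone, and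
`Γ_a(z) = (A_a)_jj - (A_a)_kk + i ((A_a)_jk + (A_a)_kj)`. Parallelism at `z` forces `Γ_a(z) = 0`
for `a ∉ {j, k}` and `Γ_k(z) = i Γ_j(z)`. The real and imaginary parts of these identities pin
down every entry of `A_a + A_aᵀ`: the diagonal entries `(A_a)_kk` with `k ≠ a` share a common
value `b_a`, and `A_a + A_aᵀ = 2 b_a 1 + e_a λᵀ + λ e_aᵀ` with `λ_j = (A_j)_jj - b_j`.
-/

open MvPolynomial

theorem MvPolynomial.IsHomogeneous.exists_eq_sum_smul_X_mul_X {R σ : Type*} [CommSemiring R]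
    [Fintype σ] {p : MvPolynomial σ R} (hp : p.IsHomogeneous 2) :
    ∃ A : Matrix σ σ R, p = ∑ j, ∑ k, A j k • (X j * X k) := by
  have hmem : p ∈ Submodule.span R (Set.range fun jk : σ × σ => X jk.1 * X jk.2) := by
    rw [← Set.image2_range, Set.image2_mul, ← Submodule.span_mul_span,
      ← homogeneousSubmodule_one_eq_span_X, ← sq, homogeneousSubmodule_one_pow]
    exact hp
  obtain ⟨c, hc⟩ := (Submodule.mem_span_range_iff_exists_fun R).mp hmem
  exact ⟨Matrix.of fun j k => c (j, k), by rw [← hc, Fintype.sum_prod_type]; rfl⟩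

section
open Matrix

variable {ι : Type*} [Fintype ι]

theorem MvPolynomial.eval₂_sum_smul_X_mul_X {R S : Type*} [CommSemiring R] [CommSemiring S]
    (f : R →+* S) (A : Matrix ι ι R) (z : ι → S) :
    eval₂ f z (∑ j, ∑ k, A j k • (X j * X k)) = z ⬝ᵥ (A.map f *ᵥ z) := by
  simp only [eval₂_sum, smul_eq_C_mul, eval₂_mul, eval₂_C, eval₂_X, dotProduct, mulVec,
    Finset.mul_sum, Matrix.map_apply]
  refine Finset.sum_congr rfl fun j _ => Finset.sum_congr rfl fun k _ => ?_
  ring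

theorem Matrix.dotProduct_mulVec_single_add_single [DecidableEq ι] {S : Type*} [CommSemiring S]
    (A : Matrix ι ι S) (j k : ι) (t : S) :
    (Pi.single j 1 + Pi.single k t) ⬝ᵥ (A *ᵥ (Pi.single j 1 + Pi.single k t))
      = A j j + t * (A j k + A k j) + t ^ 2 * A k k := by
  simp only [mulVec_add, mulVec_single, dotProduct_add, add_dotProduct, single_dotProduct,
    Pi.smul_apply, MulOpposite.smul_eq_mul_unop, MulOpposite.unop_op, col_apply]
  ring

theorem Matrix.dotProduct_mulVec_eq_of_add_transpose_eq [DecidableEq ι] {K : Type*} [Field K]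
    [NeZero (2 : K)] {A : Matrix ι ι K} {c : K} {u v : ι → K}
    (h : A + Aᵀ = (2 * c) • 1 + vecMulVec u v + vecMulVec v u) (x : ι → K) :
    x ⬝ᵥ (A *ᵥ x) = (x ⬝ᵥ x) * c + (v ⬝ᵥ x) * (u ⬝ᵥ x) := by
  have hx := congrArg (fun B => x ⬝ᵥ (B *ᵥ x)) h
  simp only [add_mulVec, smul_mulVec, one_mulVec, vecMulVec_mulVec, dotProduct_add,
    dotProduct_smul, dotProduct_transpose_mulVec, smul_eq_mul, MulOpposite.smul_eq_mul_unop,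
    MulOpposite.unop_op] at hx
  rw [dotProduct_comm x u, dotProduct_comm x v] at hx
  apply mul_left_cancel₀ (two_ne_zero (α := K))
  linear_combination hx

theorem dotProduct_self_single_add_I_single [DecidableEq ι] {j k : ι} (hjk : j ≠ k) :
    (Pi.single j 1 + Pi.single k Complex.I : ι → ℂ) ⬝ᵥ (Pi.single j 1 + Pi.single k Complex.I)
      = 0 := by
  simp [hjk, hjk.symm]

theorem dotProduct_map_ofReal_mulVec_single_add_I_single [DecidableEq ι] (B : Matrix ι ι ℝ)
    (j k : ι) :
    (Pi.single j 1 + Pi.single k Complex.I : ι → ℂ) ⬝ᵥ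
        (B.map (↑) *ᵥ (Pi.single j 1 + Pi.single k Complex.I))
      = ⟨B j j - B k k, B j k + B k j⟩ := by
  rw [dotProduct_mulVec_single_add_single]
  apply Complex.ext <;> simp [sub_eq_add_neg]

/-- `Γ(z) ∧ z = 0` on the complex cone `z ⬝ᵥ z = 0`, where `Γ_a(x) = xᵀ A_a x`. -/
def ParallelOnCone (A : ι → Matrix ι ι ℝ) : Prop :=
  ∀ z : ι → ℂ, z ⬝ᵥ z = 0 → ∀ a b : ι,
    z a * (z ⬝ᵥ ((A b).map (↑) *ᵥ z)) = z b * (z ⬝ᵥ ((A a).map (↑) *ᵥ z))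

namespace ParallelOnCone

variable [DecidableEq ι] {A : ι → Matrix ι ι ℝ} (h : ParallelOnCone A)
include h

theorem diag_eq_and_add_eq_zero {a j k : ι} (hjk : j ≠ k) (haj : a ≠ j) (hak : a ≠ k) :
    A a j j = A a k k ∧ A a j k + A a k j = 0 := by
  have hz := h _ (dotProduct_self_single_add_I_single hjk) a j
  simp only [dotProduct_map_ofReal_mulVec_single_add_I_single, Pi.add_apply,
    Pi.single_apply, haj, hak, hjk, ↓reduceIte, add_zero, zero_mul, one_mul, Complex.ext_iff,
    Complex.zero_re, Complex.zero_im] at hz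
  exact ⟨by linarith [hz.1], by linarith [hz.2]⟩

theorem add_eq_sub {j k : ι} (hjk : j ≠ k) :
    A k j k + A k k j = A j j j - A j k k := by
  have hz := h _ (dotProduct_self_single_add_I_single hjk) j k
  simp only [dotProduct_map_ofReal_mulVec_single_add_I_single, Pi.add_apply,
    Pi.single_apply, hjk, hjk.symm, ↓reduceIte, add_zero, one_mul, zero_add, Complex.ext_iff,
    Complex.mul_re, Complex.mul_im, Complex.I_re, Complex.I_im, zero_mul, zero_sub] at hz
  linarith [hz.2]

theorem exists_diag_eq_of_ne : ∃ b : ι → ℝ, ∀ i k, k ≠ i → A i k k = b i := by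
  have hconst : ∀ i, ∃ c, ∀ k, k ≠ i → A i k k = c := by
    intro i
    by_cases hex : ∃ k₀, k₀ ≠ i
    · obtain ⟨k₀, hk₀⟩ := hex
      refine ⟨A i k₀ k₀, fun k hk => ?_⟩
      rcases eq_or_ne k k₀ with rfl | hkk₀
      · rfl
      · exact (h.diag_eq_and_add_eq_zero hkk₀ hk.symm hk₀.symm).1
    · push Not at hex
      exact ⟨0, fun k hk => absurd (hex k) hk⟩
  choose b hb using hconst
  exact ⟨b, hb⟩

theorem exists_add_transpose_eq : ∃ b l : ι → ℝ, ∀ i,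
    A i + (A i)ᵀ = (2 * b i) • 1 + vecMulVec (Pi.single i 1) l + vecMulVec l (Pi.single i 1) := by
  obtain ⟨b, hb⟩ := h.exists_diag_eq_of_ne
  refine ⟨b, fun j => A j j j - b j, fun i => ?_⟩
  ext j k
  simp only [Matrix.add_apply, transpose_apply, Matrix.smul_apply, one_apply, vecMulVec_apply,
    Pi.single_apply, smul_eq_mul]
  rcases eq_or_ne j k with rfl | hjk
  · rcases eq_or_ne j i with rfl | hji
    · simp only [↓reduceIte, mul_one, one_mul]
      ring
    · simp only [hb i j hji, hji, ↓reduceIte, mul_one, mul_zero, zero_mul, add_zero]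
      ring
  · rcases eq_or_ne j i with rfl | hji
    · simp only [hjk, hjk.symm, ← hb k j hjk, ↓reduceIte, mul_zero, one_mul, zero_add, add_zero]
      linarith [h.add_eq_sub hjk.symm]
    · rcases eq_or_ne k i with rfl | hki
      · simp only [hji, ← hb j k hjk.symm, ↓reduceIte, mul_zero, zero_mul, add_zero, mul_one,
          zero_add]
        linarith [h.add_eq_sub hjk]
      · simp [hji, hki, hjk, (h.diag_eq_and_add_eq_zero hjk (Ne.symm hji) (Ne.symm hki)).2]

theorem exists_dotProduct_mulVec_eq : ∃ b l : ι → ℝ, ∀ x i,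
    x ⬝ᵥ (A i *ᵥ x) = (x ⬝ᵥ x) * b i + (l ⬝ᵥ x) * x i := by
  obtain ⟨b, l, hbl⟩ := h.exists_add_transpose_eq
  refine ⟨b, l, fun x i => ?_⟩
  rw [dotProduct_mulVec_eq_of_add_transpose_eq (hbl i), single_dotProduct, one_mul]

end ParallelOnCone

end

/-- If a vector-valued real quadratic form `Γ` (coordinates `P i`, homogeneous of degree 2)
has complexification parallel to `x` everywhere on the asymptotic cone `{(x,x) = 0} ⊆ ℂⁿ`,
then `Γ x = (x,x)·b + λ(x)·x` for some `b ∈ ℝⁿ` and linear functional `λ`. -/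
theorem stmt3 {n : ℕ} (P : Fin n → MvPolynomial (Fin n) ℝ)
    (hdeg : ∀ i, (P i).IsHomogeneous 2)
    (hpar : ∀ x : Fin n → ℂ, (∑ i, x i ^ 2) = 0 →
      ∀ i j, x i * eval x (map (algebraMap ℝ ℂ) (P j))
           = x j * eval x (map (algebraMap ℝ ℂ) (P i))) :
    ∃ (b : Fin n → ℝ) (lam : (Fin n → ℝ) →ₗ[ℝ] ℝ),
      ∀ (x : Fin n → ℝ) (i : Fin n),
        eval x (P i) = (∑ j, x j ^ 2) * b i + lam x * x i := by
  choose A hA using fun i => (hdeg i).exists_eq_sum_smul_X_mul_X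
  have hcone : ParallelOnCone A := fun z hz a b => by
    simpa only [eval_map, hA, eval₂_sum_smul_X_mul_X, Complex.coe_algebraMap] using
      hpar z (by simpa only [dotProduct, sq] using hz) a b
  obtain ⟨b, l, hbl⟩ := hcone.exists_dotProduct_mulVec_eq
  refine ⟨b, dotProductBilin ℝ ℝ l, fun x i => ?_⟩
  have heval : eval x (P i) = x ⬝ᵥ (Matrix.mulVec (A i) x) := by
    rw [hA]
    exact eval₂_sum_smul_X_mul_X (RingHom.id ℝ) (A i) x
  simpa [heval, dotProduct, sq] using hbl x i
end

section
/- For a ∈ ℝⁿ nonzero, define T^a(x) = ((a,a)·x + (x,x)·a)/((a,a) + 2(a,x) + (x,x)). Then T^a equals the composition of the inversion with center a and radius |a| with the reflection in the hyperplane orthogonal to a, i.e., T^a(x) = a + (a,a)(R(x) − a)/(R(x) − a, R(x) − a) where R(x) = x − 2((a,x)/(a,a))·a, whenever the denominators are nonzero. -/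
open RealInnerProductSpace

section Reflection

variable {E : Type*} [NormedAddCommGroup E] [InnerProductSpace ℝ E]

/-- The reflection in `aᗮ` is an isometry sending `-a` to `a`, so it moves `x + a` to `R x - a`. -/
theorem inner_self_reflection_sub {a : E} (ha : a ≠ 0) (x : E) :
    ⟪x - (2 * (⟪a, x⟫ / ⟪a, a⟫)) • a - a, x - (2 * (⟪a, x⟫ / ⟪a, a⟫)) • a - a⟫
      = ⟪a, a⟫ + 2 * ⟪a, x⟫ + ⟪x, x⟫ := by
  have haa : ⟪a, a⟫ ≠ 0 := inner_self_ne_zero.mpr ha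
  simp only [inner_sub_left, inner_sub_right, inner_smul_left, inner_smul_right,
    RCLike.conj_to_real, real_inner_comm x a]
  field_simp
  ring

theorem inv_smul_add_eq_add_div_smul_reflection_sub {a : E} (ha : a ≠ 0) (x : E)
    (hden : ⟪a, a⟫ + 2 * ⟪a, x⟫ + ⟪x, x⟫ ≠ 0) :
    (⟪a, a⟫ + 2 * ⟪a, x⟫ + ⟪x, x⟫)⁻¹ • (⟪a, a⟫ • x + ⟪x, x⟫ • a)
      = a + (⟪a, a⟫ / (⟪a, a⟫ + 2 * ⟪a, x⟫ + ⟪x, x⟫))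
          • (x - (2 * (⟪a, x⟫ / ⟪a, a⟫)) • a - a) := by
  have haa : ⟪a, a⟫ ≠ 0 := inner_self_ne_zero.mpr ha
  match_scalars
  · field_simp
  · field_simp
    ring

end Reflection

theorem stmt5_general {n : ℕ} (a x : EuclideanSpace ℝ (Fin n)) (ha : a ≠ 0)
    (hden : ⟪a, a⟫ + 2 * ⟪a, x⟫ + ⟪x, x⟫ ≠ 0)
    (R : EuclideanSpace ℝ (Fin n)) (hR : R = x - (2 * (⟪a, x⟫ / ⟪a, a⟫)) • a) :
    (⟪a, a⟫ + 2 * ⟪a, x⟫ + ⟪x, x⟫)⁻¹ • (⟪a, a⟫ • x + ⟪x, x⟫ • a)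
      = a + (⟪a, a⟫ / ⟪R - a, R - a⟫) • (R - a) := by
  subst hR
  rw [inner_self_reflection_sub ha]
  exact inv_smul_add_eq_add_div_smul_reflection_sub ha x hden

/-- The map `T^a(x) = ((a,a)x + (x,x)a)/((a,a) + 2(a,x) + (x,x))` equals the composition
of the reflection `R(x) = x − 2((a,x)/(a,a))a` in the hyperplane orthogonal to `a` with
the inversion of center `a` and radius `|a|`, wherever the denominators are nonzero. -/
theorem stmt5 {n : ℕ} (a x : EuclideanSpace ℝ (Fin n)) (ha : a ≠ 0)
    (hden : ⟪a, a⟫ + 2 * ⟪a, x⟫ + ⟪x, x⟫ ≠ 0)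
    (R : EuclideanSpace ℝ (Fin n)) (hR : R = x - (2 * (⟪a, x⟫ / ⟪a, a⟫)) • a)
    (hden2 : ⟪R - a, R - a⟫ ≠ 0) :
    (⟪a, a⟫ + 2 * ⟪a, x⟫ + ⟪x, x⟫)⁻¹ • (⟪a, a⟫ • x + ⟪x, x⟫ • a)
      = a + (⟪a, a⟫ / ⟪R - a, R - a⟫) • (R - a) :=
  stmt5_general a x ha hden R hR
end

section
/- Let A : ℝ⁴ → ℝ⁴ be a linear operator that is almost orthogonal (a scalar multiple of an orthogonal operator) and almost skew-symmetric (A = c·id + S with S skew-symmetric). Then, identifying ℝ⁴ with ℍ via the standard basis, there exists a quaternion a such that A is either left multiplication by a (A(x) = ax) or right multiplication by a (A(x) = xa). -/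
/-!
Write `A = c + S` with `S` skew-symmetric. A skew-symmetric operator on `ℍ` has the form
`x ↦ u x + x v` with `u`, `v` purely imaginary, and almost orthogonality makes `S²` a scalar.
Since `u²` and `v²` are real, `x ↦ u x v` is then a real scalar `κ`; evaluating at `1` gives
`u v = κ`, so `(u x - x u) v = 0` for every `x`. Hence `v = 0`, or `u` is central and thus `0`.
-/

open RealInnerProductSpace Quaternion

namespace LinearMap

variable {E : Type*} [NormedAddCommGroup E] [InnerProductSpace ℝ E]

theorem apply_apply_eq_neg_smul_of_skew (S : E →ₗ[ℝ] E)
    (hskew : ∀ x y, ⟪S x, y⟫ = -⟪x, S y⟫) {μ : ℝ} (hS : ∀ x y, ⟪S x, S y⟫ = μ * ⟪x, y⟫)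
    (x : E) : S (S x) = -μ • x :=
  ext_inner_left ℝ fun y => by
    rw [inner_smul_right, ← neg_eq_iff_eq_neg.mpr (hskew y (S x)), hS]; ring

variable {A : E →ₗ[ℝ] E} {c : ℝ}

theorem inner_map_sub_smul_eq_neg (hc : ∀ x y, ⟪A x, y⟫ + ⟪x, A y⟫ = 2 * c * ⟪x, y⟫)
    (x y : E) : ⟪A x - c • x, y⟫ = -⟪x, A y - c • y⟫ := by
  simp only [inner_sub_left, inner_sub_right, real_inner_smul_left, real_inner_smul_right]
  linarith [hc x y]

theorem inner_map_sub_smul_map_sub_smul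
    (hc : ∀ x y, ⟪A x, y⟫ + ⟪x, A y⟫ = 2 * c * ⟪x, y⟫) {μ : ℝ}
    (hA : ∀ x y, ⟪A x, A y⟫ = μ * ⟪x, y⟫) (x y : E) :
    ⟪A x - c • x, A y - c • y⟫ = (μ - c ^ 2) * ⟪x, y⟫ := by
  simp only [inner_sub_left, inner_sub_right, real_inner_smul_left, real_inner_smul_right, hA]
  linear_combination (-c) * hc x y

end LinearMap

namespace Quaternion

/-- A literal `⟨a, b, c, d⟩ : ℍ[ℝ]` is typed as a `QuaternionAlgebra`, on which the `ℍ[ℝ]`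
simp lemmas do not fire; quaternions obtained from this lemma avoid the problem. -/
theorem exists_re_imI_imJ_imK (a b c d : ℝ) :
    ∃ q : ℍ[ℝ], q.re = a ∧ q.imI = b ∧ q.imJ = c ∧ q.imK = d :=
  ⟨⟨a, b, c, d⟩, rfl, rfl, rfl, rfl⟩

theorem exists_mul_add_mul_of_skew (S : ℍ[ℝ] →ₗ[ℝ] ℍ[ℝ])
    (hS : ∀ x y, ⟪S x, y⟫ = -⟪x, S y⟫) :
    ∃ u v : ℍ[ℝ], u.re = 0 ∧ v.re = 0 ∧ ∀ x, S x = u * x + x * v := by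
  obtain ⟨i, hi⟩ := exists_re_imI_imJ_imK 0 1 0 0
  obtain ⟨j, hj⟩ := exists_re_imI_imJ_imK 0 0 1 0
  obtain ⟨k, hk⟩ := exists_re_imI_imJ_imK 0 0 0 1
  have h11 := hS 1 1
  have h1i := hS 1 i
  have h1j := hS 1 j
  have h1k := hS 1 k
  have hii := hS i i
  have hij := hS i j
  have hik := hS i k
  have hjj := hS j j
  have hjk := hS j k
  have hkk := hS k k
  simp only [inner_def, re_mul, re_star, imI_star, imJ_star, imK_star, star_one,
    hi, hj, hk, re_one, imI_one, imJ_one, imK_one] at h11 h1i h1j h1k hii hij hik hjj hjk hkk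
  have e1 : (S 1).re = 0 := by linarith
  have ei : (S i).re = -(S 1).imI := by linarith
  have ej : (S j).re = -(S 1).imJ := by linarith
  have ek : (S k).re = -(S 1).imK := by linarith
  have eii : (S i).imI = 0 := by linarith
  have ejj : (S j).imJ = 0 := by linarith
  have ekk : (S k).imK = 0 := by linarith
  have eji : (S j).imI = -(S i).imJ := by linarith
  have eki : (S k).imI = -(S i).imK := by linarith
  have ekj : (S k).imJ = -(S j).imK := by linarith
  -- solve `S 1 = u + v`, `S i = u i + i v`, `S j = u j + j v` for the imaginary parts
  obtain ⟨u, hu⟩ := exists_re_imI_imJ_imK 0 (((S 1).imI + (S j).imK) / 2)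
    (((S 1).imJ - (S i).imK) / 2) (((S 1).imK + (S i).imJ) / 2)
  obtain ⟨v, hv⟩ := exists_re_imI_imJ_imK 0 (((S 1).imI - (S j).imK) / 2)
    (((S 1).imJ + (S i).imK) / 2) (((S 1).imK - (S i).imJ) / 2)
  refine ⟨u, v, hu.1, hv.1, fun x => ?_⟩
  have hx : x = x.re • 1 + x.imI • i + x.imJ • j + x.imK • k := by
    ext <;> simp [hi, hj, hk]
  rw [hx, map_add, map_add, map_add, map_smul, map_smul, map_smul, map_smul]
  ext <;> simp [hi, hj, hk, hu, hv, e1, ei, ej, ek, eii, ejj, ekk, eji, eki, ekj] <;> ring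

theorem eq_coe_re_of_forall_mul_comm {u : ℍ[ℝ]} (hu : ∀ x, u * x = x * u) : u = u.re := by
  obtain ⟨i, hi⟩ := exists_re_imI_imJ_imK 0 1 0 0
  obtain ⟨j, hj⟩ := exists_re_imI_imJ_imK 0 0 1 0
  have hui := hu i
  have huj := hu j
  simp only [Quaternion.ext_iff, re_mul, imI_mul, imJ_mul, imK_mul, hi, hj] at hui huj
  ext <;> simp <;> linarith

theorem eq_zero_or_eq_zero_of_forall_mul_mul_eq_smul {u v : ℍ[ℝ]} (hu : u.re = 0) {κ : ℝ}
    (h : ∀ x, u * x * v = κ • x) : u = 0 ∨ v = 0 := by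
  refine or_iff_not_imp_right.mpr fun hv => ?_
  have hcomm : ∀ x, u * x = x * u := fun x => by
    have huv : u * v = κ • 1 := by simpa using h 1
    refine sub_eq_zero.mp ((mul_eq_zero.mp ?_).resolve_right hv)
    rw [sub_mul, h, mul_assoc, huv, mul_smul_one, sub_self]
  rw [eq_coe_re_of_forall_mul_comm hcomm, hu, coe_zero]

theorem eq_zero_or_eq_zero_of_apply_apply_eq_neg_smul (S : ℍ[ℝ] →ₗ[ℝ] ℍ[ℝ])
    {u v : ℍ[ℝ]} (hu : u.re = 0) (hv : v.re = 0) (hS : ∀ x, S x = u * x + x * v) {μ : ℝ}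
    (hSS : ∀ x, S (S x) = -μ • x) : u = 0 ∨ v = 0 := by
  refine eq_zero_or_eq_zero_of_forall_mul_mul_eq_smul hu
    (κ := (normSq u + normSq v - μ) / 2) fun x => ?_
  have hu2 : u * u = -((normSq u : ℝ) : ℍ[ℝ]) := by rw [← sq, sq_eq_neg_normSq.mpr hu]
  have hv2 : v * v = -((normSq v : ℝ) : ℍ[ℝ]) := by rw [← sq, sq_eq_neg_normSq.mpr hv]
  have hexp : S (S x) = u * u * x + 2 * (u * x * v) + x * (v * v) := by
    rw [hS, hS]; noncomm_ring
  rw [hSS, hu2, hv2, neg_mul, mul_neg, coe_mul_eq_smul, mul_coe_eq_smul, two_mul] at hexp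
  linear_combination (norm := module) (-1 / 2 : ℝ) • hexp

end Quaternion

/-- A linear operator on `ℝ⁴ ≅ ℍ` that is almost orthogonal (a scalar multiple of an
orthogonal operator) and almost skew-symmetric (`A + Aᵀ` a scalar multiple of the
identity) is left or right multiplication by some quaternion. -/
theorem stmt12 (A : ℍ[ℝ] →ₗ[ℝ] ℍ[ℝ])
    (halmostOrth : ∃ (r : ℝ) (U : ℍ[ℝ] →ₗ[ℝ] ℍ[ℝ]), (∀ x, ‖U x‖ = ‖x‖) ∧
        ∀ x, A x = r • U x)
    (halmostSkew : ∃ c : ℝ, ∀ x y : ℍ[ℝ], ⟪A x, y⟫ + ⟪x, A y⟫ = 2 * c * ⟪x, y⟫) :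
    ∃ a : ℍ[ℝ], (∀ x, A x = a * x) ∨ ∀ x, A x = x * a := by
  obtain ⟨r, U, hU, hAU⟩ := halmostOrth
  obtain ⟨c, hc⟩ := halmostSkew
  have hA : ∀ x y, ⟪A x, A y⟫ = r ^ 2 * ⟪x, y⟫ := fun x y => by
    have hUxy : ⟪U x, U y⟫ = ⟪x, y⟫ :=
      (⟨U, hU⟩ : ℍ[ℝ] →ₗᵢ[ℝ] ℍ[ℝ]).inner_map_map x y
    rw [hAU, hAU, real_inner_smul_left, real_inner_smul_right, hUxy]
    ring
  set S := A - c • LinearMap.id with hS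
  have hS_skew : ∀ x y, ⟪S x, y⟫ = -⟪x, S y⟫ := LinearMap.inner_map_sub_smul_eq_neg hc
  obtain ⟨u, v, hu, hv, hSuv⟩ := exists_mul_add_mul_of_skew S hS_skew
  have hAuv : ∀ x, A x = c • x + u * x + x * v := fun x => by
    rw [add_assoc, ← hSuv]; simp [hS]
  rcases eq_zero_or_eq_zero_of_apply_apply_eq_neg_smul S hu hv hSuv
    (S.apply_apply_eq_neg_smul_of_skew hS_skew
      (LinearMap.inner_map_sub_smul_map_sub_smul hc hA)) with rfl | rfl
  · refine ⟨c + v, Or.inr fun x => ?_⟩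
    rw [hAuv, mul_add, mul_coe_eq_smul]; simp
  · refine ⟨c + u, Or.inl fun x => ?_⟩
    rw [hAuv, add_mul, coe_mul_eq_smul]; simp
end

section
/- Let A : ℝ⁴ → ℝ⁴ be linear, identify ℝ⁴ with ℍ, and suppose the circle (or line) S_x through 0 with unit tangent direction x/|x| has acceleration vector at 0 (with respect to arc length) equal to w(x) = 2(Φ₂(x) − ((Φ₂(x),x)/(x,x))x)/(x,x) where Φ₂(x) = A(x)·x. If Im A(x) ≠ 0 (where Im and Re are taken pointwise: A(x) = Re A(x) + Im A(x) with Re A(x) ∈ ℝ·1), then the center of S_x, namely w(x)/(w(x),w(x)), equals −½ (Im A(x))⁻¹ · x (quaternionic inverse and product). -/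
open RealInnerProductSpace Quaternion

/-!
Since `⟪a * x, x⟫ = Re a · |x|²`, removing from `Φ = a x` its component along `x` leaves
`(Im a) x`, so `w = 2 (Im a) x / |x|² = 2 (Im a) (x̄)⁻¹`. In `ℍ` the inversion `y ↦ y / |y|²`
is `y ↦ (ȳ)⁻¹`, hence the center is `(w̄)⁻¹ = (−2 x⁻¹ (Im a))⁻¹ = −½ (Im a)⁻¹ x`.
-/

namespace Quaternion

theorem inner_mul_self_right (a x : ℍ[ℝ]) : ⟪a * x, x⟫ = a.re * normSq x := by
  rw [inner_def, mul_assoc, self_mul_star, mul_coe_eq_smul, re_smul, smul_eq_mul, mul_comm]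

theorem mul_sub_inner_smul_eq_im_mul (a x : ℍ[ℝ]) :
    a * x - (⟪a * x, x⟫ / ⟪x, x⟫) • x = a.im * x := by
  rcases eq_or_ne x 0 with rfl | hx
  · simp
  rw [inner_mul_self_right, inner_self, mul_div_cancel_right₀ _ (normSq_ne_zero.2 hx),
    ← coe_mul_eq_smul, ← sub_mul, sub_eq_iff_eq_add'.2 (re_add_im a).symm]

theorem inv_inner_self_smul (y : ℍ[ℝ]) : ⟪y, y⟫⁻¹ • y = (star y)⁻¹ := by
  rw [inner_self, inv_def, normSq_star, star_star]

end Quaternion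

theorem stmt19_general (A : ℍ[ℝ] →ₗ[ℝ] ℍ[ℝ]) (x : ℍ[ℝ])
    (Φ w : ℍ[ℝ]) (hΦ : Φ = A x * x)
    (hw : w = (2 / ⟪x, x⟫) • (Φ - (⟪Φ, x⟫ / ⟪x, x⟫) • x)) :
    (⟪w, w⟫)⁻¹ • w = -((2 : ℝ)⁻¹ • (((A x).im)⁻¹ * x)) := by
  have hw_im : w = (2 : ℝ) • ((A x).im * (star x)⁻¹) := by
    rw [hw, hΦ, mul_sub_inner_smul_eq_im_mul, ← inv_inner_self_smul, mul_smul_comm, smul_smul,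
      div_eq_mul_inv]
  rw [inv_inner_self_smul, hw_im, Quaternion.star_smul, star_mul, star_inv₀, star_star, star_im,
    smul_inv₀, mul_inv_rev, inv_inv, inv_neg, neg_mul, smul_neg]

/-- Let `A : ℝ⁴ → ℝ⁴` be linear, `ℝ⁴ ≅ ℍ`, `Φ₂(x) = A(x)·x`, and let
`w(x) = 2(Φ₂(x) − ((Φ₂(x),x)/(x,x))x)/(x,x)` be the acceleration at `0` of the circle
through `0` with tangent direction `x`. If `Im A(x) ≠ 0`, then the center of this
circle, `w/(w,w)`, equals `−½ (Im A(x))⁻¹ · x` (quaternionic inverse and product). -/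
theorem stmt19 (A : ℍ[ℝ] →ₗ[ℝ] ℍ[ℝ]) (x : ℍ[ℝ]) (hx : x ≠ 0)
    (him : (A x).im ≠ 0) (Φ w : ℍ[ℝ]) (hΦ : Φ = A x * x)
    (hw : w = (2 / ⟪x, x⟫) • (Φ - (⟪Φ, x⟫ / ⟪x, x⟫) • x)) :
    (⟪w, w⟫)⁻¹ • w = -((2 : ℝ)⁻¹ • (((A x).im)⁻¹ * x)) :=
  stmt19_general A x Φ w hΦ hw
end
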